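/- Let α ∈ Σ^k, ℓ ≥ r, ℓ ≥ 1, and let L_α ⊆ α·Σ*·ᾱ. Then H_α*(L_α,ℓ,r) = H_α*(L_α,ℓ−1,r) ∪ ⋃_{u ∈ Σ^ℓ} P_α(uα,ℓ)* · u · (H_α*(L_α,ℓ−1,r) ∩ α·Σ*·ᾱ·ū) · (P_α(uα,r))‾*. -/

import Mathlib

open Computability

/-- Reverse-complement of a word under the involution `bar`. -/
def wbar {S : Type} (bar : S → S) (w : List S) : List S := (w.map bar).reverse

/-- The set of `α`-prefixes of `w` of length at most `ℓ`. -/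
def Pa {S : Type} (α w : List S) (ℓ : ℕ) : Language S :=
  {v | v ++ α <+: w ∧ v.length ≤ ℓ}

/-- `α Σ* ᾱ` : words with prefix `α` and suffix `ᾱ`. -/
def Dom {S : Type} (bar : S → S) (α : List S) : Language S :=
  {z | ∃ β, z = α ++ β ++ wbar bar α}

/-- One-step parameterized hairpin completion with binding word `α`,
left bound `ℓ`, right bound `r`. -/
def HaP {S : Type} (bar : S → S) (α : List S) (ℓ r : ℕ) (L : Language S) : Language S :=
  {z | ∃ γ β, γ.length ≤ ℓ ∧ z = γ ++ α ++ β ++ wbar bar α ++ wbar bar γ ∧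
      α ++ β ++ wbar bar α ++ wbar bar γ ∈ L} ⊔
  {z | ∃ γ β, γ.length ≤ r ∧ z = γ ++ α ++ β ++ wbar bar α ++ wbar bar γ ∧
      γ ++ α ++ β ++ wbar bar α ∈ L}

/-- One-step parameterized hairpin completion `H_k(L,ℓ,r)`. -/
def HkP {S : Type} (bar : S → S) (k ℓ r : ℕ) (L : Language S) : Language S :=
  {z | ∃ α : List S, α.length = k ∧ z ∈ HaP bar α ℓ r L}

def HaIter {S : Type} (bar : S → S) (α : List S) (ℓ r : ℕ) (L : Language S) : ℕ → Language S
  | 0 => L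
  | n + 1 => HaP bar α ℓ r (HaIter bar α ℓ r L n)

/-- Iterated parameterized hairpin completion `H_α*(L,ℓ,r)`. -/
def HaStar {S : Type} (bar : S → S) (α : List S) (ℓ r : ℕ) (L : Language S) : Language S :=
  {z | ∃ n, z ∈ HaIter bar α ℓ r L n}

def HkIter {S : Type} (bar : S → S) (k ℓ r : ℕ) (L : Language S) : ℕ → Language S
  | 0 => L
  | n + 1 => HkP bar k ℓ r (HkIter bar k ℓ r L n)

/-- Iterated parameterized hairpin completion `H_k*(L,ℓ,r)`. -/
def HkStar {S : Type} (bar : S → S) (k ℓ r : ℕ) (L : Language S) : Language S :=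
  {z | ∃ n, z ∈ HkIter bar k ℓ r L n}

/-- Unbounded two-sided hairpin completion `H_k(L)`. -/
def HU {S : Type} (bar : S → S) (k : ℕ) (L : Language S) : Language S :=
  {z | ∃ γ α β, α.length = k ∧ z = γ ++ α ++ β ++ wbar bar α ++ wbar bar γ ∧
      (α ++ β ++ wbar bar α ++ wbar bar γ ∈ L ∨ γ ++ α ++ β ++ wbar bar α ∈ L)}

/-- Unbounded right-sided hairpin completion `RH_k(L)`. -/
def RHU {S : Type} (bar : S → S) (k : ℕ) (L : Language S) : Language S :=
  {z | ∃ γ α β, α.length = k ∧ z = γ ++ α ++ β ++ wbar bar α ++ wbar bar γ ∧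
      γ ++ α ++ β ++ wbar bar α ∈ L}

def HUIter {S : Type} (bar : S → S) (k : ℕ) (L : Language S) : ℕ → Language S
  | 0 => L
  | n + 1 => HU bar k (HUIter bar k L n)

/-- Iterated unbounded two-sided hairpin completion `H_k*(L)`. -/
def HUStar {S : Type} (bar : S → S) (k : ℕ) (L : Language S) : Language S :=
  {z | ∃ n, z ∈ HUIter bar k L n}

def RHUIter {S : Type} (bar : S → S) (k : ℕ) (L : Language S) : ℕ → Language S
  | 0 => L
  | n + 1 => RHU bar k (RHUIter bar k L n)

/-- Iterated unbounded right-sided hairpin completion `RH_k*(L)`. -/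
def RHUStar {S : Type} (bar : S → S) (k : ℕ) (L : Language S) : Language S :=
  {z | ∃ n, z ∈ RHUIter bar k L n}

/-- Image of a language under reverse-complement. -/
def barSet {S : Type} (bar : S → S) (A : Language S) : Language S := wbar bar '' A

/-! A word of `H_α*(L,ℓ,r)` outside `H_α*(L,ℓ-1,r)` arises from a left completion of full
length `ℓ`, by some `u`, of a word `αβᾱū` of `H_α*(L,ℓ-1,r)`; from then on it reads
`P · uα · β · (R · uα)‾`. A later left (right) completion by `γ` needs `γα` to be a prefix of
`R · uα` (of `P · uα`), and such a `γ` cuts into `α`-prefixes of `uα`, so `P` and `R` stay in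
`P_α(uα,ℓ)*` and `P_α(uα,r)*`. Conversely, the pieces of `P` and `R` can be glued back one at a
time. -/

variable {S : Type} {bar : S → S}

section Words

theorem wbar_append (x y : List S) : wbar bar (x ++ y) = wbar bar y ++ wbar bar x := by
  simp [wbar]

theorem length_wbar (x : List S) : (wbar bar x).length = x.length := by
  simp [wbar]

theorem wbar_suffix_wbar_iff (hbar : Function.Involutive bar) {x y : List S} :
    wbar bar x <:+ wbar bar y ↔ x <+: y := by
  simp only [wbar, List.reverse_suffix]
  exact ⟨fun h => by simpa [hbar.comp_self] using h.map bar, fun h => h.map bar⟩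

theorem barSet_kstar (A : Language S) : barSet bar (A∗) = (barSet bar A)∗ := by
  have h (B : Language S) : barSet bar B = (Language.map bar B).reverse := by
    rw [Language.reverse_eq_image]
    exact (Set.image_image List.reverse (List.map bar) B).symm
  rw [h, h, Language.map_kstar, Language.reverse_kstar]

theorem append_mem_kstar {A : Language S} {x y : List S} (hx : x ∈ A∗) (hy : y ∈ A∗) :
    x ++ y ∈ A∗ :=
  kstar_mul_kstar A ▸ Language.append_mem_mul hx hy

end Words

section AlphaPrefixes

variable {α y : List S}

theorem prefix_flatten_append (hy : α <+: y) {m : ℕ} :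
    ∀ {gs : List (List S)}, (∀ g ∈ gs, g ∈ Pa α y m) → α <+: gs.flatten ++ y
  | [], _ => hy
  | g :: gs, hgs => by
    have hg : α <+: g ++ α :=
      List.prefix_of_prefix_length_le hy (hgs g List.mem_cons_self).1 (by simp)
    have hgs' : α <+: gs.flatten ++ y :=
      prefix_flatten_append hy fun g' hg' => hgs g' (List.mem_cons_of_mem g hg')
    simpa [List.append_assoc] using hg.trans ((List.prefix_append_right_inj g).2 hgs')

theorem append_prefix_cons_flatten_append_iff (hy : α <+: y) {m : ℕ} {g γ : List S}
    {gs : List (List S)} (hgs : ∀ g' ∈ g :: gs, g' ∈ Pa α y m) (hγ : γ.length ≤ g.length) :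
    γ ++ α <+: (g :: gs).flatten ++ y ↔ γ ++ α <+: g ++ α := by
  have hg : g ++ α <+: (g :: gs).flatten ++ y := by
    have := (List.prefix_append_right_inj g).2
      (prefix_flatten_append hy fun g' hg' => hgs g' (List.mem_cons_of_mem g hg'))
    simpa [List.append_assoc] using this
  exact ⟨fun h => List.prefix_of_prefix_length_le h hg (by simpa using hγ), fun h => h.trans hg⟩

/-- Cut `γ` at the boundaries of the factors of `P` that it covers. -/
theorem mem_kstar_Pa_of_prefix (hy : α <+: y) {m m' : ℕ} {P γ : List S}
    (hP : P ∈ (Pa α y m')∗) (hγ : γ ++ α <+: P ++ y) (hm : γ.length ≤ m) :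
    γ ∈ (Pa α y m)∗ := by
  obtain ⟨gs, rfl, hgs⟩ := Language.mem_kstar.1 hP
  clear hP
  induction gs generalizing γ with
  | nil => exact le_kstar (a := Pa α y m) ⟨by simpa using hγ, hm⟩
  | cons g gs ih =>
    have hg := (hgs g List.mem_cons_self).1
    by_cases hγg : γ.length ≤ g.length
    · exact le_kstar (a := Pa α y m)
        ⟨((append_prefix_cons_flatten_append_iff hy hgs hγg).1 hγ).trans hg, hm⟩
    · obtain ⟨γ', rfl⟩ : g <+: γ :=
        List.prefix_of_prefix_length_le (by simp [List.append_assoc])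
          ((List.prefix_append γ α).trans hγ) (by omega)
      have hγ' : γ' ++ α <+: gs.flatten ++ y :=
        (List.prefix_append_right_inj g).1 (by simpa [List.append_assoc] using hγ)
      simp only [List.length_append] at hm hγg
      exact append_mem_kstar (le_kstar (a := Pa α y m) ⟨hg, by omega⟩)
        (ih (γ := γ') (by omega) (fun g' hg' => hgs g' (List.mem_cons_of_mem g hg')) hγ')

end AlphaPrefixes

section Dom

variable {α x γ : List S}

theorem prefix_of_mem_Dom (hx : x ∈ Dom bar α) : α <+: x := by
  obtain ⟨β, rfl⟩ := hx
  exact ⟨β ++ wbar bar α, by simp⟩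

theorem wbar_suffix_of_mem_Dom (hx : x ∈ Dom bar α) : wbar bar α <:+ x := by
  obtain ⟨β, rfl⟩ := hx
  exact ⟨α ++ β, by simp⟩

theorem prefix_append_of_append_mem_Dom (h : γ ++ α ++ x ∈ Dom bar α) : α <+: γ ++ α :=
  List.prefix_of_prefix_length_le (prefix_of_mem_Dom h) (List.prefix_append _ x) (by simp)

theorem prefix_append_of_append_wbar_mem_Dom (hbar : Function.Involutive bar)
    (h : x ++ wbar bar (γ ++ α) ∈ Dom bar α) : α <+: γ ++ α :=
  (wbar_suffix_wbar_iff hbar).1 <| List.suffix_of_suffix_length_le (wbar_suffix_of_mem_Dom h)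
    (List.suffix_append x _) (by simp [length_wbar])

theorem cons_mem_Dom (hγ : α <+: γ ++ α) (hx : x ∈ Dom bar α) : γ ++ x ∈ Dom bar α := by
  obtain ⟨t, ht⟩ := hγ
  obtain ⟨β, rfl⟩ := hx
  exact ⟨t ++ β, by simp only [← List.append_assoc, ht]⟩

theorem append_wbar_mem_Dom (hγ : α <+: γ ++ α) (hx : x ∈ Dom bar α) :
    x ++ wbar bar γ ∈ Dom bar α := by
  obtain ⟨t, ht⟩ := hγ
  obtain ⟨β, rfl⟩ := hx
  refine ⟨β ++ wbar bar t, ?_⟩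
  have : wbar bar α ++ wbar bar γ = wbar bar t ++ wbar bar α := by
    rw [← wbar_append, ← ht, wbar_append]
  simp only [List.append_assoc, this]

end Dom

section Completion

variable {α : List S} {ℓ r : ℕ} {L : Language S}

theorem HaP_mono {ℓ₁ ℓ₂ r₁ r₂ : ℕ} {L₁ L₂ : Language S} (hℓ : ℓ₁ ≤ ℓ₂) (hr : r₁ ≤ r₂)
    (hL : L₁ ≤ L₂) : HaP bar α ℓ₁ r₁ L₁ ≤ HaP bar α ℓ₂ r₂ L₂ := by
  rintro z (⟨γ, β, hγ, rfl, hx⟩ | ⟨γ, β, hγ, rfl, hx⟩)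
  · exact Or.inl ⟨γ, β, hγ.trans hℓ, rfl, hL hx⟩
  · exact Or.inr ⟨γ, β, hγ.trans hr, rfl, hL hx⟩

theorem le_HaStar : L ≤ HaStar bar α ℓ r L :=
  fun _ hz => ⟨0, hz⟩

theorem HaP_HaStar_le : HaP bar α ℓ r (HaStar bar α ℓ r L) ≤ HaStar bar α ℓ r L := by
  rintro z (⟨γ, β, hγ, rfl, n, hx⟩ | ⟨γ, β, hγ, rfl, n, hx⟩)
  · exact ⟨n + 1, Or.inl ⟨γ, β, hγ, rfl, hx⟩⟩
  · exact ⟨n + 1, Or.inr ⟨γ, β, hγ, rfl, hx⟩⟩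

theorem HaStar_le_of_HaP_le {M : Language S} (hL : L ≤ M) (hM : HaP bar α ℓ r M ≤ M) :
    HaStar bar α ℓ r L ≤ M := by
  rintro z ⟨n, hz⟩
  induction n generalizing z with
  | zero => exact hL hz
  | succ n ih => exact hM (HaP_mono le_rfl le_rfl (fun _ hx => ih hx) hz)

theorem HaStar_mono {ℓ₁ ℓ₂ : ℕ} (h : ℓ₁ ≤ ℓ₂) : HaStar bar α ℓ₁ r L ≤ HaStar bar α ℓ₂ r L :=
  HaStar_le_of_HaP_le le_HaStar ((HaP_mono h le_rfl le_rfl).trans HaP_HaStar_le)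

theorem HaP_Dom_le (hbar : Function.Involutive bar) : HaP bar α ℓ r (Dom bar α) ≤ Dom bar α := by
  rintro z (⟨γ, β, -, rfl, hx⟩ | ⟨γ, β, -, rfl, hx⟩)
  · have hγ := prefix_append_of_append_wbar_mem_Dom hbar
      (by simpa [wbar_append, List.append_assoc] using hx : α ++ β ++ wbar bar (γ ++ α) ∈ Dom bar α)
    have h := cons_mem_Dom hγ hx
    simp only [List.append_assoc] at h ⊢
    exact h
  · have hγ := prefix_append_of_append_mem_Dom
      (by simpa [List.append_assoc] using hx : γ ++ α ++ (β ++ wbar bar α) ∈ Dom bar α)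
    exact append_wbar_mem_Dom hγ hx

theorem HaStar_le_Dom (hbar : Function.Involutive bar) (hL : L ≤ Dom bar α) :
    HaStar bar α ℓ r L ≤ Dom bar α :=
  HaStar_le_of_HaP_le hL (HaP_Dom_le hbar)

theorem cons_mem_HaStar {X Y β p : List S} (hz : X ++ β ++ wbar bar Y ∈ HaStar bar α ℓ r L)
    (hp : p.length ≤ ℓ) (hX : α <+: X) (hY : p ++ α <+: Y) :
    p ++ X ++ β ++ wbar bar Y ∈ HaStar bar α ℓ r L := by
  obtain ⟨s, rfl⟩ := hX
  obtain ⟨t, rfl⟩ := hY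
  refine HaP_HaStar_le (Or.inl ⟨p, s ++ β ++ wbar bar t, hp, ?_, ?_⟩)
  · simp [wbar_append]
  · simpa [wbar_append] using hz

theorem append_wbar_mem_HaStar {X Y β q : List S} (hz : X ++ β ++ wbar bar Y ∈ HaStar bar α ℓ r L)
    (hq : q.length ≤ r) (hX : q ++ α <+: X) (hY : α <+: Y) :
    X ++ β ++ wbar bar (q ++ Y) ∈ HaStar bar α ℓ r L := by
  obtain ⟨s, rfl⟩ := hX
  obtain ⟨t, rfl⟩ := hY
  refine HaP_HaStar_le (Or.inr ⟨q, s ++ β ++ wbar bar t, hq, ?_, ?_⟩)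
  · simp [wbar_append]
  · simpa [wbar_append] using hz

end Completion

section Block

variable {α : List S} {ℓ r : ℕ} {L : Language S}

def HaBlock (bar : S → S) (α : List S) (ℓ r : ℕ) (W : Language S) (u : List S) :
    Language S :=
  {z | ∃ P ∈ (Pa α (u ++ α) ℓ)∗, ∃ R ∈ (Pa α (u ++ α) r)∗, ∃ β,
    α ++ β ++ wbar bar α ++ wbar bar u ∈ W ∧ z = P ++ (u ++ α) ++ β ++ wbar bar (R ++ (u ++ α))}

theorem kstar_mul_eq_HaBlock (W : Language S) (u : List S) :
    (Pa α (u ++ α) ℓ)∗ * (({u} : Language S) *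
      ((W ⊓ {z' | ∃ β, z' = α ++ β ++ wbar bar α ++ wbar bar u}) *
        (barSet bar (Pa α (u ++ α) r))∗)) = HaBlock bar α ℓ r W u := by
  ext z
  simp only [Language.mem_mul, ← barSet_kstar]
  constructor
  · rintro ⟨P, hP, _, ⟨_, rfl, _, ⟨w, ⟨hw, β, rfl⟩, _, ⟨R, hR, rfl⟩, rfl⟩, rfl⟩, rfl⟩
    exact ⟨P, hP, R, hR, β, hw, by simp [wbar_append]⟩
  · rintro ⟨P, hP, R, hR, β, hw, rfl⟩
    refine ⟨P, hP, _, ⟨u, rfl, _, ⟨_, ⟨hw, β, rfl⟩, _, ⟨R, hR, rfl⟩, rfl⟩, rfl⟩, ?_⟩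
    simp [wbar_append]

theorem prefix_append_of_mem_HaBlock (hbar : Function.Involutive bar) {W : Language S}
    (hW : W ≤ Dom bar α) {u z : List S} (hz : z ∈ HaBlock bar α ℓ r W u) : α <+: u ++ α := by
  obtain ⟨-, -, -, -, β, hw, -⟩ := hz
  have hw' : α ++ β ++ wbar bar α ++ wbar bar u ∈ Dom bar α := hW hw
  exact prefix_append_of_append_wbar_mem_Dom hbar (x := α ++ β)
    (by simpa [wbar_append, List.append_assoc] using hw')

theorem cons_mem_HaBlock (hbar : Function.Involutive bar) {W : Language S} (hW : W ≤ Dom bar α)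
    {u x γ : List S} (hu : u.length = ℓ) (hx : x ∈ HaBlock bar α ℓ r W u) (hγ : γ.length ≤ ℓ)
    (hγx : wbar bar (γ ++ α) <:+ x) : γ ++ x ∈ HaBlock bar α ℓ r W u := by
  have hy := prefix_append_of_mem_HaBlock hbar hW hx
  obtain ⟨P, hP, R, hR, β, hw, rfl⟩ := hx
  have hγR : γ ++ α <+: R ++ (u ++ α) :=
    (wbar_suffix_wbar_iff hbar).1 <| List.suffix_of_suffix_length_le hγx
      (List.suffix_append _ _) (by simp [length_wbar]; omega)
  exact ⟨γ ++ P, append_mem_kstar (mem_kstar_Pa_of_prefix hy hR hγR hγ) hP, R, hR, β, hw,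
    by simp⟩

theorem append_wbar_mem_HaBlock (hbar : Function.Involutive bar) {W : Language S}
    (hW : W ≤ Dom bar α) {u x γ : List S} (hu : u.length = ℓ) (hr : r ≤ ℓ)
    (hx : x ∈ HaBlock bar α ℓ r W u) (hγ : γ.length ≤ r) (hγx : γ ++ α <+: x) :
    x ++ wbar bar γ ∈ HaBlock bar α ℓ r W u := by
  have hy := prefix_append_of_mem_HaBlock hbar hW hx
  obtain ⟨P, hP, R, hR, β, hw, rfl⟩ := hx
  have hγP : γ ++ α <+: P ++ (u ++ α) :=
    List.prefix_of_prefix_length_le hγx (by simp [List.append_assoc]) (by simp; omega)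
  exact ⟨P, hP, γ ++ R, append_mem_kstar (mem_kstar_Pa_of_prefix hy hP hγP hγ) hR, β, hw,
    by simp [wbar_append]⟩

theorem HaP_le_sup_HaBlock (hbar : Function.Involutive bar) (hL : L ≤ Dom bar α) (hr : r ≤ ℓ) :
    HaP bar α ℓ r (HaStar bar α (ℓ - 1) r L ⊔
        {z | ∃ u : List S, u.length = ℓ ∧ z ∈ HaBlock bar α ℓ r (HaStar bar α (ℓ - 1) r L) u}) ≤
      HaStar bar α (ℓ - 1) r L ⊔
        {z | ∃ u : List S, u.length = ℓ ∧ z ∈ HaBlock bar α ℓ r (HaStar bar α (ℓ - 1) r L) u} := by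
  have hW := HaStar_le_Dom (ℓ := ℓ - 1) (r := r) hbar hL
  rintro z (⟨γ, β, hγ, rfl, hx | ⟨u, hu, hx⟩⟩ | ⟨γ, β, hγ, rfl, hx | ⟨u, hu, hx⟩⟩)
  · by_cases hγℓ : γ.length = ℓ
    · exact Or.inr ⟨γ, hγℓ, [], Language.nil_mem_kstar _, [], Language.nil_mem_kstar _, β, hx,
        by simp [wbar_append]⟩
    · exact Or.inl (HaP_HaStar_le (Or.inl ⟨γ, β, by omega, rfl, hx⟩))
  · refine Or.inr ⟨u, hu, ?_⟩
    simpa [List.append_assoc] using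
      cons_mem_HaBlock hbar hW hu hx hγ ⟨α ++ β, by simp [wbar_append]⟩
  · exact Or.inl (HaP_HaStar_le (Or.inr ⟨γ, β, hγ, rfl, hx⟩))
  · exact Or.inr ⟨u, hu, append_wbar_mem_HaBlock hbar hW hu hr hx hγ ⟨β ++ wbar bar α, by simp⟩⟩

/-- Of the two outermost pieces, the shorter one is glued last: its `α`-extension is then a prefix
of the other side. -/
theorem flatten_append_mem_HaStar {y β : List S} (hy : α <+: y)
    (hbase : y ++ β ++ wbar bar y ∈ HaStar bar α ℓ r L) :
    ∀ (ps rs : List (List S)), (∀ p ∈ ps, p ∈ Pa α y ℓ) → (∀ q ∈ rs, q ∈ Pa α y r) →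
      ps.flatten ++ y ++ β ++ wbar bar (rs.flatten ++ y) ∈ HaStar bar α ℓ r L
  | [], [], _, _ => by simpa using hbase
  | p :: ps, [], hps, hrs => by
    obtain ⟨hp, hps⟩ := List.forall_mem_cons.1 hps
    simpa [List.append_assoc] using
      cons_mem_HaStar (flatten_append_mem_HaStar hy hbase ps [] hps hrs) hp.2
        (prefix_flatten_append hy hps) (by simpa using hp.1)
  | [], q :: rs, hps, hrs => by
    obtain ⟨hq, hrs⟩ := List.forall_mem_cons.1 hrs
    simpa [List.append_assoc] using
      append_wbar_mem_HaStar (flatten_append_mem_HaStar hy hbase [] rs hps hrs) hq.2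
        (by simpa using hq.1) (prefix_flatten_append hy hrs)
  | p :: ps, q :: rs, hps, hrs => by
    have hp := hps p List.mem_cons_self
    have hq := hrs q List.mem_cons_self
    rcases le_total p.length q.length with hpq | hqp
    · have hpY := (append_prefix_cons_flatten_append_iff hy hrs hpq).2
        (List.prefix_of_prefix_length_le hp.1 hq.1 (by simpa))
      obtain ⟨-, hps⟩ := List.forall_mem_cons.1 hps
      simpa [List.append_assoc] using
        cons_mem_HaStar (flatten_append_mem_HaStar hy hbase ps (q :: rs) hps hrs) hp.2
          (prefix_flatten_append hy hps) hpY
    · have hqX := (append_prefix_cons_flatten_append_iff hy hps hqp).2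
        (List.prefix_of_prefix_length_le hq.1 hp.1 (by simpa))
      obtain ⟨-, hrs⟩ := List.forall_mem_cons.1 hrs
      simpa [List.append_assoc] using
        append_wbar_mem_HaStar (flatten_append_mem_HaStar hy hbase (p :: ps) rs hps hrs) hq.2
          hqX (prefix_flatten_append hy hrs)

theorem HaBlock_le_HaStar (hbar : Function.Involutive bar) (hL : L ≤ Dom bar α) {u : List S}
    (hu : u.length = ℓ) : HaBlock bar α ℓ r (HaStar bar α (ℓ - 1) r L) u ≤ HaStar bar α ℓ r L := by
  intro z hz
  have hy := prefix_append_of_mem_HaBlock hbar (HaStar_le_Dom hbar hL) hz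
  obtain ⟨P, hP, R, hR, β, hw, rfl⟩ := hz
  obtain ⟨ps, rfl, hps⟩ := Language.mem_kstar.1 hP
  obtain ⟨rs, rfl, hrs⟩ := Language.mem_kstar.1 hR
  have hw' : α ++ β ++ wbar bar α ++ wbar bar u ∈ HaStar bar α ℓ r L :=
    HaStar_mono (Nat.sub_le ℓ 1) hw
  rw [List.append_assoc, ← wbar_append] at hw'
  have hbase := cons_mem_HaStar hw' hu.le (List.prefix_refl α) (List.prefix_refl (u ++ α))
  exact flatten_append_mem_HaStar hy (by simpa [List.append_assoc] using hbase) ps rs hps hrs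

end Block

theorem HaStar_rec_general {S : Type} (bar : S → S)
    (hbar : ∀ a, bar (bar a) = a) (ℓ r : ℕ) (hr : r ≤ ℓ)
    (α : List S)
    (Lα : Language S) (hL : Lα ≤ Dom bar α) :
    HaStar bar α ℓ r Lα =
      HaStar bar α (ℓ - 1) r Lα ⊔
      {z | ∃ u : List S, u.length = ℓ ∧
        z ∈ (Pa α (u ++ α) ℓ)∗ * (({u} : Language S) *
          ((HaStar bar α (ℓ - 1) r Lα ⊓
              {z' | ∃ β, z' = α ++ β ++ wbar bar α ++ wbar bar u}) *
            (barSet bar (Pa α (u ++ α) r))∗))} := by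
  simp only [kstar_mul_eq_HaBlock]
  refine le_antisymm (HaStar_le_of_HaP_le (le_HaStar.trans le_sup_left)
    (HaP_le_sup_HaBlock hbar hL hr)) (sup_le (HaStar_mono (Nat.sub_le ℓ 1)) ?_)
  rintro z ⟨u, hu, hz⟩
  exact HaBlock_le_HaStar hbar hL hu hz

/-- For `ℓ ≥ r`, `ℓ ≥ 1`:
`H_α*(L_α,ℓ,r) = H_α*(L_α,ℓ−1,r) ∪ ⋃_{u ∈ Σ^ℓ} P_α(uα,ℓ)* · u ·
(H_α*(L_α,ℓ−1,r) ∩ α·Σ*·ᾱ·ū) · (P_α(uα,r))‾*`. -/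
theorem HaStar_rec {S : Type} (bar : S → S)
    (hbar : ∀ a, bar (bar a) = a) (k ℓ r : ℕ) (hℓ : 1 ≤ ℓ) (hr : r ≤ ℓ)
    (α : List S) (hα : α.length = k)
    (Lα : Language S) (hL : Lα ≤ Dom bar α) :
    HaStar bar α ℓ r Lα =
      HaStar bar α (ℓ - 1) r Lα ⊔
      {z | ∃ u : List S, u.length = ℓ ∧
        z ∈ (Pa α (u ++ α) ℓ)∗ * (({u} : Language S) *
          ((HaStar bar α (ℓ - 1) r Lα ⊓
              {z' | ∃ β, z' = α ++ β ++ wbar bar α ++ wbar bar u}) *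
            (barSet bar (Pa α (u ++ α) r))∗))} :=
  HaStar_rec_general bar hbar ℓ r hr α Lα hL
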